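/- For every real s, the function x ↦ P(x, 1/x + s·(-x)^{-3/2}) tends to s^4 - 2s^2 as x → -∞. -/

import Mathlib

/-!
Put `t = (-x)^(-1/2)`, so that `t → 0⁺` as `x → -∞`, `x = -1/t²` and the curve
`y = 1/x + s(-x)^(-3/2)` becomes `y = -t² + s t³`. Along this curve all negative powers
of `t` in `P(x, y)` cancel, leaving a polynomial in `t` whose value at `t = 0` is `s⁴ - 2s²`.
-/

open Filter
noncomputable def P (x y : ℝ) : ℝ := y^4*x^6 - 4*y^3*x^5 + (3*y^3+6*y^2)*x^4 + (-7*y^2-4*y)*x^3 + (3*y^2+5*y+1)*x^2 + (-3*y-1)*x + y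

open Topology

theorem P_neg_inv_sq (s t : ℝ) (ht : t ≠ 0) :
    P (-(t ^ 2)⁻¹) (-t ^ 2 + s * t ^ 3) =
      s ^ 4 - 2 * s ^ 2 + (3 * s ^ 3 - 3 * s) * t + (3 * s ^ 2 - 1) * t ^ 2 + s * t ^ 3 := by
  unfold P
  field_simp
  ring

theorem rpow_neg_half_sq {u : ℝ} (hu : 0 < u) : (u ^ (-(1 : ℝ) / 2)) ^ 2 = u⁻¹ := by
  rw [← Real.rpow_natCast, ← Real.rpow_mul hu.le]
  norm_num [Real.rpow_neg_one]

theorem rpow_neg_three_halves {u : ℝ} (hu : 0 < u) :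
    u ^ (-(3 : ℝ) / 2) = (u ^ (-(1 : ℝ) / 2)) ^ 3 := by
  rw [← Real.rpow_natCast, ← Real.rpow_mul hu.le]
  norm_num

theorem tendsto_neg_rpow_neg_half_atBot :
    Tendsto (fun x : ℝ => (-x) ^ (-(1 : ℝ) / 2)) atBot (𝓝 0) := by
  have := (tendsto_rpow_neg_atTop (by norm_num : (0 : ℝ) < 1 / 2)).comp tendsto_neg_atBot_atTop
  simpa [neg_div, Function.comp_def] using this

theorem stmt8 : ∀ s : ℝ,
    Tendsto (fun x : ℝ => P x (1/x + s*(-x)^(-(3:ℝ)/2))) atBot (nhds (s^4 - 2*s^2)) := by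
  intro s
  set Q : ℝ → ℝ := fun t =>
    s ^ 4 - 2 * s ^ 2 + (3 * s ^ 3 - 3 * s) * t + (3 * s ^ 2 - 1) * t ^ 2 + s * t ^ 3
  have hQ : Tendsto (fun x : ℝ => Q ((-x) ^ (-(1 : ℝ) / 2))) atBot (𝓝 (s ^ 4 - 2 * s ^ 2)) := by
    have hcont : Continuous Q := by fun_prop
    simpa [Q, Function.comp_def] using (hcont.tendsto 0).comp tendsto_neg_rpow_neg_half_atBot
  refine hQ.congr' ?_
  filter_upwards [eventually_lt_atBot 0] with x hx
  have hu : 0 < -x := neg_pos.mpr hx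
  set t := (-x) ^ (-(1 : ℝ) / 2)
  have hx_eq : x = -(t ^ 2)⁻¹ := by rw [rpow_neg_half_sq hu, inv_inv, neg_neg]
  have hy_eq : 1 / x + s * (-x) ^ (-(3 : ℝ) / 2) = -t ^ 2 + s * t ^ 3 := by
    rw [rpow_neg_three_halves hu, rpow_neg_half_sq hu, one_div, ← inv_neg, neg_neg]
  rw [hy_eq, hx_eq, P_neg_inv_sq s t (Real.rpow_pos_of_pos hu _).ne']
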